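/- Let q be a positive integer, G = SL₂(ℤ/qℤ), and μ : G → ℂ any function. For a divisor Q of q define μ_Q(x) = (1/|K_Q|)·Σ_{y ∈ G, y ≡ x (mod Q)} μ(y). Then for any divisors q₁, q₂ of q, one has the convolution identity μ_{q₁} ∗ μ_{q₂} = μ_{d} ∗ μ_{d}, where d = gcd(q₁, q₂) and (f ∗ g)(x) = Σ_{y ∈ G} f(y)·g(y⁻¹x). -/

import Mathlib

open scoped Classical

/-- `SL₂(ℤ/qℤ)`. -/
abbrev SL2 (q : ℕ) := Matrix.SpecialLinearGroup (Fin 2) (ZMod q)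

/-- `y ≡ x (mod Q)`: the entrywise reductions of `x` and `y` modulo `Q` agree. -/
def redEq (q Q : ℕ) (x y : SL2 q) : Prop :=
  ∀ i j, (ZMod.cast ((x : Matrix (Fin 2) (Fin 2) (ZMod q)) i j) : ZMod Q) =
    ZMod.cast ((y : Matrix (Fin 2) (Fin 2) (ZMod q)) i j)

/-- The congruence class of `x` modulo `Q` in `SL₂(ℤ/qℤ)`. -/
noncomputable def cclass (q : ℕ) [NeZero q] (Q : ℕ) (x : SL2 q) : Finset (SL2 q) :=
  Finset.univ.filter (fun y => redEq q Q x y)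

/-- `K_Q`, the kernel of reduction mod `Q`, i.e. the congruence class of `1` mod `Q`. -/
noncomputable def KQ (q : ℕ) [NeZero q] (Q : ℕ) : Finset (SL2 q) :=
  cclass q Q 1

/-- `μ_Q(x) = (1/|K_Q|)·Σ_{y ≡ x (mod Q)} μ(y)`. -/
noncomputable def muQ (q : ℕ) [NeZero q] (Q : ℕ) (μ : SL2 q → ℂ) (x : SL2 q) : ℂ :=
  (1 / ((KQ q Q).card : ℂ)) * ∑ y ∈ cclass q Q x, μ y


/-- Convolution of two functions on `SL₂(ℤ/qℤ)`. -/
noncomputable def conv (q : ℕ) [NeZero q] (f g : SL2 q → ℂ) : SL2 q → ℂ :=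
  fun x => ∑ y, f y * g (y⁻¹ * x)

/-! The averaging `μ ↦ μ_Q` is convolution with the uniform density `u_Q` of the normal subgroup
`K_Q`, which commutes with every function, so `μ_{q₁} ∗ μ_{q₂} = μ ∗ (u_{q₁} ∗ u_{q₂}) ∗ μ`.
For normal subgroups `H, K` of a finite group, `u_H ∗ u_K = u_{H ⊔ K}`, and
`K_{q₁} ⊔ K_{q₂} = K_d`. For the nontrivial inclusion, write `x ≡ 1 (mod d)` entrywise as
`1 + U + V` with `U ≡ 0 (mod q₁)` and `V ≡ 0 (mod q₂)` (Bézout); the matrix `1 + U` has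
determinant `1` modulo `lcm(q₁, q₂)`, and it lifts to some `a ∈ K_{q₁}` with `a⁻¹ x ∈ K_{q₂}`
because reduction `SL₂(ℤ/qℤ) → SL₂(ℤ/lℤ)` is surjective for `l ∣ q`. Surjectivity holds since a
matrix lifts as soon as its bottom row `(c, d)` has a coprime lift, and one is obtained by choosing
`t` with `d + c t` a unit mod `l` and lifting that unit to a unit mod `q`. -/

open Finset

section Convolution

variable {G : Type*} [Group G] [Fintype G]

noncomputable def groupConv (f g : G → ℂ) : G → ℂ :=
  fun x => ∑ y, f y * g (y⁻¹ * x)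

theorem groupConv_assoc (f g h : G → ℂ) :
    groupConv (groupConv f g) h = groupConv f (groupConv g h) := by
  funext x
  simp only [groupConv, sum_mul, mul_sum]
  rw [sum_comm]
  refine sum_congr rfl fun z _ => Fintype.sum_equiv (Equiv.mulLeft z⁻¹) _ _ fun y => ?_
  rw [Equiv.coe_mulLeft, show (z⁻¹ * y)⁻¹ * (z⁻¹ * x) = y⁻¹ * x by group, mul_assoc]

theorem sum_groupConv (f g : G → ℂ) :
    ∑ x, groupConv f g x = (∑ x, f x) * ∑ x, g x := by
  simp only [groupConv]
  rw [sum_comm, sum_mul]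
  exact sum_congr rfl fun y _ => by
    rw [← mul_sum]
    exact congrArg _ (Fintype.sum_equiv (Equiv.mulLeft y⁻¹) _ _ fun _ => rfl)

namespace Subgroup

noncomputable def uniformDensity (K : Subgroup G) : G → ℂ :=
  fun x => if x ∈ K then (Nat.card K : ℂ)⁻¹ else 0

theorem sum_ite_mem_const (K : Subgroup G) (c : ℂ) :
    ∑ x, (if x ∈ K then c else 0) = Nat.card K * c := by
  rw [sum_ite, sum_const_zero, add_zero, sum_const, nsmul_eq_mul, Nat.card_eq_fintype_card,
    Fintype.card_subtype]

theorem sum_uniformDensity (K : Subgroup G) : ∑ x, K.uniformDensity x = 1 :=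
  (K.sum_ite_mem_const _).trans (mul_inv_cancel₀ (Nat.cast_ne_zero.mpr Nat.card_pos.ne'))

theorem eq_uniformDensity {K : Subgroup G} {F : G → ℂ} (hsupp : ∀ x ∉ K, F x = 0)
    (hconst : ∀ x ∈ K, F x = F 1) (hsum : ∑ x, F x = 1) : F = K.uniformDensity := by
  have hF : ∀ x, F x = if x ∈ K then F 1 else 0 := fun x => by
    split_ifs with hx
    exacts [hconst x hx, hsupp x hx]
  have hF1 : F 1 = (Nat.card K : ℂ)⁻¹ := by
    rw [Fintype.sum_congr _ _ hF, sum_ite_mem_const] at hsum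
    exact eq_inv_of_mul_eq_one_right hsum
  funext x
  rw [hF, hF1, uniformDensity]

theorem groupConv_uniformDensity_comm (K : Subgroup G) [K.Normal] (f : G → ℂ) :
    groupConv K.uniformDensity f = groupConv f K.uniformDensity := by
  funext x
  refine Fintype.sum_equiv ((Equiv.inv G).trans (Equiv.mulRight x)) _ _ fun y => ?_
  have hconj : (y⁻¹ * x)⁻¹ * x ∈ K ↔ y ∈ K := by
    rw [mul_inv_rev, inv_inv, mul_assoc, ‹K.Normal›.mem_comm_iff, mul_inv_cancel_right]
  simp only [Equiv.trans_apply, Equiv.inv_apply, Equiv.coe_mulRight, uniformDensity, hconj]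
  ring

theorem uniformDensity_groupConv_uniformDensity (H K : Subgroup G) [H.Normal] :
    groupConv H.uniformDensity K.uniformDensity = (H ⊔ K).uniformDensity := by
  set S := groupConv H.uniformDensity K.uniformDensity
  have hleft : ∀ h ∈ H, ∀ x, S (h * x) = S x := fun h hh x =>
    Fintype.sum_equiv (Equiv.mulLeft h⁻¹) _ _ fun y => by
      simp only [Equiv.coe_mulLeft, uniformDensity, mul_inv_rev, inv_inv, mul_assoc,
        mul_mem_cancel_left (inv_mem hh)]
  have hright : ∀ k ∈ K, ∀ x, S (x * k) = S x := fun k hk x =>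
    sum_congr rfl fun y _ => by
      simp only [uniformDensity, ← mul_assoc, mul_mem_cancel_right hk]
  refine eq_uniformDensity (fun x hx => sum_eq_zero fun y _ => ?_) (fun x hx => ?_) ?_
  · by_cases hy : y ∈ H
    · have hyx : y⁻¹ * x ∉ K := fun h => hx (mul_inv_cancel_left y x ▸ mul_mem_sup hy h)
      simp [uniformDensity, hyx]
    · simp [uniformDensity, hy]
  · obtain ⟨h, hh, k, hk, rfl⟩ := mem_sup_of_normal_left.mp hx
    rw [hleft h hh, ← one_mul k, hright k hk]
  · rw [sum_groupConv, sum_uniformDensity, sum_uniformDensity, one_mul]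

end Subgroup

end Convolution

namespace Matrix.SpecialLinearGroup

open scoped MatrixGroups

variable {n : Type*} [Fintype n] [DecidableEq n] {R S : Type*} [CommRing R] [CommRing S]

theorem mapMatrix_sub_one_mem_ker {f : R →+* S} {A : SpecialLinearGroup n R} (hA : map f A = 1)
    (i j : n) : A i j - (1 : Matrix n n R) i j ∈ RingHom.ker f := by
  have h : f.mapMatrix (A : Matrix n n R) = f.mapMatrix 1 := by
    rw [map_one]
    exact congrArg Subtype.val hA
  rw [RingHom.mem_ker, map_sub, sub_eq_zero]
  exact congr_fun₂ h i j

variable {T S₁ S₂ : Type*} [CommRing T] [CommRing S₁] [CommRing S₂]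

theorem _root_.RingHom.mapMatrix_eq_of_ker_le {f : R →+* S} {g : R →+* T}
    (h : RingHom.ker f ≤ RingHom.ker g) {A B : Matrix n n R}
    (hAB : f.mapMatrix A = f.mapMatrix B) : g.mapMatrix A = g.mapMatrix B := by
  ext i j
  have hij : f (A i j - B i j) = 0 := by simpa [sub_eq_zero] using congr_fun₂ hAB i j
  simpa [sub_eq_zero] using h hij

theorem ker_map_mono {f : R →+* S} {g : R →+* T} (h : RingHom.ker f ≤ RingHom.ker g) :
    (map f : SpecialLinearGroup n R →* _).ker ≤ (map g).ker := fun x hx => by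
  have hfx : f.mapMatrix (x : Matrix n n R) = f.mapMatrix 1 := by
    rw [map_one]
    exact congrArg Subtype.val hx
  exact Subtype.ext ((RingHom.mapMatrix_eq_of_ker_le h hfx).trans (map_one _))

theorem ker_map_le_sup_ker_map (f : R →+* S) (g : R →+* T) (g₁ : R →+* S₁) (g₂ : R →+* S₂)
    (hf : Function.Surjective (map f : SpecialLinearGroup n R →* SpecialLinearGroup n S))
    (hker : RingHom.ker f = RingHom.ker g₁ ⊓ RingHom.ker g₂)
    (hg : RingHom.ker g ≤ RingHom.ker g₁ ⊔ RingHom.ker g₂) :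
    (map g : SpecialLinearGroup n R →* _).ker ≤ (map g₁).ker ⊔ (map g₂).ker := by
  intro x hx
  choose U hU V hV hUV using fun i j =>
    Submodule.mem_sup.mp (hg (mapMatrix_sub_one_mem_ker hx i j))
  set M : Matrix n n R := 1 + Matrix.of U
  have hUker : g₁.mapMatrix (Matrix.of U) = 0 := by
    ext i j
    exact RingHom.mem_ker.mp (hU i j)
  have hVker : g₂.mapMatrix (Matrix.of V) = 0 := by
    ext i j
    exact RingHom.mem_ker.mp (hV i j)
  have hxM : (x : Matrix n n R) = M + Matrix.of V := by
    ext i j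
    simp only [M, add_apply, of_apply]
    linear_combination (hUV i j).symm
  have hM₁ : g₁.mapMatrix M = 1 := by
    rw [map_add, map_one, hUker, add_zero]
  have hM₂ : g₂.mapMatrix x = g₂.mapMatrix M := by
    rw [hxM, map_add, hVker, add_zero]
  have hdet : f M.det = 1 := by
    rw [← sub_eq_zero, ← map_one f, ← map_sub, ← RingHom.mem_ker, hker]
    refine Ideal.mem_inf.mpr ⟨?_, ?_⟩ <;>
      rw [RingHom.mem_ker, map_sub, map_one, sub_eq_zero, RingHom.map_det]
    · rw [hM₁, det_one]
    · rw [← hM₂, ← RingHom.map_det, x.det_coe, map_one]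
  obtain ⟨a, ha⟩ := hf ⟨f.mapMatrix M, by rw [← RingHom.map_det, hdet]⟩
  have hker₁ : RingHom.ker f ≤ RingHom.ker g₁ := hker ▸ inf_le_left
  have hker₂ : RingHom.ker f ≤ RingHom.ker g₂ := hker ▸ inf_le_right
  have ha' : f.mapMatrix a = f.mapMatrix M := congrArg Subtype.val ha
  have ha₁ : map g₁ a = 1 :=
    Subtype.ext ((RingHom.mapMatrix_eq_of_ker_le hker₁ ha').trans hM₁)
  have ha₂ : map g₂ (a⁻¹ * x) = 1 := by
    rw [map_mul, map_inv, inv_mul_eq_one]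
    exact Subtype.ext ((RingHom.mapMatrix_eq_of_ker_le hker₂ ha').trans hM₂.symm)
  exact mul_inv_cancel_left a x ▸ Subgroup.mul_mem_sup ha₁ ha₂

theorem exists_map_eq_of_isCoprime {f : R →+* S} (hf : Function.Surjective f) (M : SL(2, S))
    {c d : R} (hc : f c = M 1 0) (hd : f d = M 1 1) (hcd : IsCoprime c d) :
    ∃ N : SL(2, R), map f N = M := by
  obtain ⟨u, v, huv⟩ := hcd
  obtain ⟨a, ha⟩ := hf (M 0 0)
  obtain ⟨b, hb⟩ := hf (M 0 1)
  -- `e` is the defect of the naive lift; the Bézout relation `u c + v d = 1` absorbs it.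
  set e := a * d - b * c - 1 with he_def
  have he : f e = 0 := by
    have hM := M.det_coe
    rw [det_fin_two] at hM
    simp only [e, map_sub, map_mul, map_one, ha, hb, hc, hd, hM, sub_self]
  refine ⟨(⟨!![a - e * v, b + e * u; c, d], ?_⟩ : SL(2, R)), ?_⟩
  · rw [det_fin_two_of]
    linear_combination (-e) * huv - he_def
  · refine Subtype.ext ?_
    change f.mapMatrix !![a - e * v, b + e * u; c, d] = M
    ext i j
    fin_cases i <;> fin_cases j <;> simp [ha, hb, hc, hd, he]

end Matrix.SpecialLinearGroup

namespace ZMod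

variable {n : ℕ} [NeZero n]

theorem not_dvd_val_of_isCoprime {c d : ZMod n} (h : IsCoprime c d) {p : ℕ} (hp : p.Prime)
    (hpn : p ∣ n) (hc : p ∣ c.val) : ¬ p ∣ d.val := fun hd => by
  have : Fact (1 < p) := ⟨hp.one_lt⟩
  have hzero : ∀ z : ZMod n, p ∣ z.val → castHom hpn (ZMod p) z = 0 := fun z hz => by
    rw [castHom_apply, cast_eq_val, natCast_eq_zero_iff]
    exact hz
  have := h.map (castHom hpn (ZMod p))
  rw [hzero c hc, hzero d hd, isCoprime_zero_left] at this
  exact not_isUnit_zero this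

theorem exists_isUnit_add_mul {c d : ZMod n} (h : IsCoprime c d) :
    ∃ t : ZMod n, IsUnit (d + c * t) := by
  set t := ∏ p ∈ n.primeFactors with ¬ p ∣ d.val, p
  refine ⟨t, ?_⟩
  have hcast : d + c * t = ((d.val + c.val * t : ℕ) : ZMod n) := by
    push_cast
    rw [natCast_val, natCast_val, cast_id, cast_id]
  rw [hcast, isUnit_iff_coprime]
  refine Nat.coprime_of_dvd fun p hp hpdt hpn => ?_
  by_cases hpd : p ∣ d.val
  · have hpt : p.Coprime t := Nat.Coprime.prod_right fun r hr => by
      rw [Finset.mem_filter, Nat.mem_primeFactors] at hr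
      exact (Nat.coprime_primes hp hr.1.1).mpr fun hpr => hr.2 (hpr ▸ hpd)
    exact not_dvd_val_of_isCoprime h hp hpn
      (hpt.dvd_of_dvd_mul_right ((Nat.dvd_add_right hpd).mp hpdt)) hpd
  · have hpt : p ∣ t := Finset.dvd_prod_of_mem _
      (Finset.mem_filter.mpr ⟨Nat.mem_primeFactors.mpr ⟨hp, hpn, NeZero.ne n⟩, hpd⟩)
    exact hpd ((Nat.dvd_add_left (hpt.mul_left _)).mp hpdt)

section Reduction

open Matrix.SpecialLinearGroup
open scoped MatrixGroups

variable {q : ℕ} [NeZero q]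

theorem map_castHom_surjective {l : ℕ} (h : l ∣ q) :
    Function.Surjective (map (castHom h (ZMod l)) : SL(2, ZMod q) →* SL(2, ZMod l)) := by
  intro M
  have : NeZero l := ⟨fun hl => NeZero.ne q (Nat.eq_zero_of_zero_dvd (hl ▸ h))⟩
  obtain ⟨t, ht⟩ := exists_isUnit_add_mul (M.isCoprime_row 1)
  obtain ⟨u, hu⟩ := unitsMap_surjective h ht.unit
  obtain ⟨c, hc⟩ := castHom_surjective h (M 1 0)
  obtain ⟨s, hs⟩ := castHom_surjective h t
  refine exists_map_eq_of_isCoprime (castHom_surjective h) M hc (d := u - c * s) ?_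
    ⟨↑u⁻¹ * s, ↑u⁻¹, by linear_combination u.inv_mul⟩
  have hu' : castHom h (ZMod l) u = M 1 1 + M 1 0 * t := congrArg Units.val hu
  rw [map_sub, map_mul, hu', hc, hs, add_sub_cancel_right]

theorem mem_ker_castHom {m : ℕ} (h : m ∣ q) (z : ZMod q) :
    z ∈ RingHom.ker (castHom h (ZMod m)) ↔ m ∣ z.val := by
  rw [RingHom.mem_ker, castHom_apply, cast_eq_val, natCast_eq_zero_iff]

theorem ker_castHom_lcm {q₁ q₂ : ℕ} (h₁ : q₁ ∣ q) (h₂ : q₂ ∣ q) :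
    RingHom.ker (castHom (Nat.lcm_dvd h₁ h₂) (ZMod (q₁.lcm q₂))) =
      RingHom.ker (castHom h₁ (ZMod q₁)) ⊓ RingHom.ker (castHom h₂ (ZMod q₂)) := by
  ext z
  rw [Ideal.mem_inf, mem_ker_castHom, mem_ker_castHom, mem_ker_castHom, Nat.lcm_dvd_iff]

theorem ker_castHom_gcd_le {q₁ q₂ : ℕ} (h₁ : q₁ ∣ q) (h₂ : q₂ ∣ q) :
    RingHom.ker (castHom ((Nat.gcd_dvd_left q₁ q₂).trans h₁) (ZMod (q₁.gcd q₂))) ≤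
      RingHom.ker (castHom h₁ (ZMod q₁)) ⊔ RingHom.ker (castHom h₂ (ZMod q₂)) := by
  intro z hz
  obtain ⟨k, hk⟩ := (mem_ker_castHom _ z).mp hz
  have hself : ∀ {m : ℕ} (h : m ∣ q), (m : ZMod q) ∈ RingHom.ker (castHom h (ZMod m)) :=
    fun h => by rw [RingHom.mem_ker, map_natCast, natCast_self]
  have hz : z = q₁ * (q₁.gcdA q₂ * k) + q₂ * (q₁.gcdB q₂ * k) := by
    rw [← natCast_zmod_val z, hk, Nat.cast_mul, ← Int.cast_natCast (q₁.gcd q₂),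
      Nat.gcd_eq_gcd_ab]
    push_cast
    ring
  rw [hz]
  exact Submodule.add_mem_sup (Ideal.mul_mem_right _ _ (hself h₁))
    (Ideal.mul_mem_right _ _ (hself h₂))

end Reduction

end ZMod

noncomputable def congrKernel {q Q : ℕ} (h : Q ∣ q) : Subgroup (SL2 q) :=
  (Matrix.SpecialLinearGroup.map (ZMod.castHom h (ZMod Q))).ker

instance {q Q : ℕ} (h : Q ∣ q) : (congrKernel h).Normal :=
  MonoidHom.normal_ker _

theorem congrKernel_le_of_dvd {q m m' : ℕ} [NeZero q] (hm : m ∣ q) (hm' : m' ∣ q)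
    (hdvd : m ∣ m') : congrKernel hm' ≤ congrKernel hm :=
  Matrix.SpecialLinearGroup.ker_map_mono fun z hz => by
    rw [ZMod.mem_ker_castHom] at hz ⊢
    exact hdvd.trans hz

theorem congrKernel_sup_congrKernel {q q₁ q₂ : ℕ} [NeZero q] (h₁ : q₁ ∣ q) (h₂ : q₂ ∣ q) :
    congrKernel h₁ ⊔ congrKernel h₂ = congrKernel ((Nat.gcd_dvd_left q₁ q₂).trans h₁) :=
  le_antisymm
    (sup_le (congrKernel_le_of_dvd _ h₁ (Nat.gcd_dvd_left _ _))
      (congrKernel_le_of_dvd _ h₂ (Nat.gcd_dvd_right _ _)))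
    (Matrix.SpecialLinearGroup.ker_map_le_sup_ker_map _ _ _ _
      (ZMod.map_castHom_surjective (Nat.lcm_dvd h₁ h₂)) (ZMod.ker_castHom_lcm h₁ h₂)
      (ZMod.ker_castHom_gcd_le h₁ h₂))

theorem redEq_iff_inv_mul_mem {q Q : ℕ} (h : Q ∣ q) (x y : SL2 q) :
    redEq q Q x y ↔ y⁻¹ * x ∈ congrKernel h := by
  rw [congrKernel, MonoidHom.mem_ker, map_mul, map_inv, inv_mul_eq_one,
    Matrix.SpecialLinearGroup.ext_iff]
  simp only [Matrix.SpecialLinearGroup.map_apply_coe, RingHom.mapMatrix_apply, Matrix.map_apply,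
    ZMod.castHom_apply, redEq, eq_comm]

theorem card_KQ {q Q : ℕ} [NeZero q] (h : Q ∣ q) : (KQ q Q).card = Nat.card (congrKernel h) := by
  rw [Nat.card_eq_fintype_card, Fintype.card_subtype, KQ, cclass]
  simp only [redEq_iff_inv_mul_mem h, mul_one, inv_mem_iff]

theorem muQ_eq_groupConv {q Q : ℕ} [NeZero q] (h : Q ∣ q) (μ : SL2 q → ℂ) :
    muQ q Q μ = groupConv μ (congrKernel h).uniformDensity := by
  funext x
  rw [muQ, card_KQ h, cclass, Finset.sum_filter, one_div, mul_comm, Finset.sum_mul]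
  refine Finset.sum_congr rfl fun y _ => ?_
  simp only [Subgroup.uniformDensity, redEq_iff_inv_mul_mem h, mul_ite, mul_zero, ite_mul,
    zero_mul]

theorem conv_muQ_muQ {q q₁ q₂ : ℕ} [NeZero q] (h₁ : q₁ ∣ q) (h₂ : q₂ ∣ q) (μ : SL2 q → ℂ) :
    conv q (muQ q q₁ μ) (muQ q q₂ μ) =
      groupConv μ (groupConv (congrKernel h₁ ⊔ congrKernel h₂).uniformDensity μ) := by
  change groupConv _ _ = _
  rw [muQ_eq_groupConv h₁, muQ_eq_groupConv h₂,
    ← Subgroup.groupConv_uniformDensity_comm (congrKernel h₂), groupConv_assoc,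
    ← groupConv_assoc _ _ μ, Subgroup.uniformDensity_groupConv_uniformDensity]

/-- **Convolution identity:** for divisors `q₁, q₂` of `q`,
`μ_{q₁} ∗ μ_{q₂} = μ_d ∗ μ_d` where `d = gcd(q₁, q₂)`. -/
theorem muQ_conv_muQ (q : ℕ) [NeZero q] (μ : SL2 q → ℂ) (q₁ q₂ : ℕ)
    (h₁ : q₁ ∣ q) (h₂ : q₂ ∣ q) :
    conv q (muQ q q₁ μ) (muQ q q₂ μ) =
      conv q (muQ q (Nat.gcd q₁ q₂) μ) (muQ q (Nat.gcd q₁ q₂) μ) := by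
  have hd : q₁.gcd q₂ ∣ q := (Nat.gcd_dvd_left q₁ q₂).trans h₁
  rw [conv_muQ_muQ h₁ h₂, conv_muQ_muQ hd hd, sup_idem, congrKernel_sup_congrKernel]
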